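/- arXiv:math/0605454 — 2 statements merged into one kernel-verified Lean document; each statement's English description precedes it below -/
import Mathlib

section
/- Let Γ be a compact connected set of finite H¹ measure in a metric space, and let X be a 2^{-n}-net for Γ (a maximal 2^{-n}-separated subset). Then the cardinality of X satisfies #X · 2^{-n-1} ≤ H¹(Γ); in particular #X ≤ 2^{n+1}·H¹(Γ). -/
/-!
For `x ∈ Γ` and `r ≤ dist x y` with `y ∈ Γ`, connectedness makes `dist x` map `Γ ∩ ball x r`
onto `[0, r)`; since `dist x` is 1-Lipschitz, `H¹(Γ ∩ ball x r) ≥ r`. The balls of radius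
`2^{-n-1}` around the net points are disjoint, so summing gives `#X · 2^{-n-1} ≤ H¹(Γ)`, which
also forces `X` to be finite. When `X` is a single point there is no second point to go to,
and the bound `2^{-n-1} < diam Γ ≤ H¹(Γ)` is used instead.
-/

open MeasureTheory ENNReal NNReal Metric Set

theorem encard_mul_le_measure_of_pairwiseDisjoint {α ι : Type*} [MeasurableSpace α]
    (μ : Measure α) {s : Set α} {X : Set ι} {A : ι → Set α} {c : ℝ≥0∞}
    (hA : ∀ i ∈ X, MeasurableSet (A i)) (hdisj : X.PairwiseDisjoint A)
    (hc : ∀ i ∈ X, c ≤ μ (s ∩ A i)) : X.encard * c ≤ μ s :=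
  -- passing to `μ.restrict s` avoids any measurability assumption on `s`
  calc X.encard * c = ∑' _ : X, c := (ENNReal.tsum_set_const X c).symm
    _ ≤ ∑' i : X, μ.restrict s (A i) := ENNReal.tsum_le_tsum fun i => by
        rw [Measure.restrict_apply (hA i i.2), inter_comm]; exact hc i i.2
    _ ≤ μ.restrict s (⋃ i : X, A i) :=
        tsum_meas_le_meas_iUnion_of_disjoint _ (fun i => hA i i.2)
          fun i j hij => hdisj i.2 j.2 (Subtype.coe_injective.ne hij)
    _ ≤ μ s := by
        rw [← Measure.restrict_apply_univ s]; exact measure_mono (subset_univ _)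

theorem Set.finite_and_ncard_mul_le_of_encard_mul_le {α : Type*} {X : Set α} {c m : ℝ≥0∞}
    (hc : c ≠ 0) (hm : m ≠ ⊤) (h : X.encard * c ≤ m) : X.Finite ∧ X.ncard * c ≤ m := by
  have hfin : X.Finite := by
    rw [← encard_ne_top_iff]
    rintro htop
    rw [htop, ENat.toENNReal_top, top_mul hc] at h
    exact hm (top_le_iff.1 h)
  refine ⟨hfin, ?_⟩
  rwa [← hfin.cast_ncard_eq, ENat.toENNReal_coe] at h

section Hausdorff

variable {M : Type*} [MetricSpace M] [MeasurableSpace M] [BorelSpace M] {Γ : Set M}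

theorem IsPreconnected.ofReal_le_hausdorffMeasure_inter_ball (hΓ : IsPreconnected Γ)
    {x y : M} (hx : x ∈ Γ) (hy : y ∈ Γ) {r : ℝ} (hr : r ≤ dist x y) :
    ENNReal.ofReal r ≤ μH[1] (Γ ∩ ball x r) := by
  have hIcc : Icc 0 (dist x y) ⊆ dist x '' Γ :=
    (hΓ.image _ (continuous_const.dist continuous_id).continuousOn).Icc_subset
      ⟨x, hx, dist_self x⟩ ⟨y, hy, rfl⟩
  have hIco : Ico 0 r ⊆ dist x '' (Γ ∩ ball x r) := by
    intro t ht
    obtain ⟨z, hz, rfl⟩ := hIcc ⟨ht.1, ht.2.le.trans hr⟩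
    exact ⟨z, ⟨hz, by rw [mem_ball, dist_comm]; exact ht.2⟩, rfl⟩
  calc ENNReal.ofReal r = μH[1] (Ico 0 r) := by simp [hausdorffMeasure_real]
    _ ≤ μH[1] (dist x '' (Γ ∩ ball x r)) := measure_mono hIco
    _ ≤ μH[1] (Γ ∩ ball x r) := by
        simpa using (LipschitzWith.dist_right x).hausdorffMeasure_image_le zero_le_one _

theorem IsPreconnected.ediam_le_hausdorffMeasure (hΓ : IsPreconnected Γ) :
    ediam Γ ≤ μH[1] Γ :=
  ediam_le fun x hx y hy => by
    rw [edist_dist]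
    exact (hΓ.ofReal_le_hausdorffMeasure_inter_ball hx hy le_rfl).trans
      (measure_mono inter_subset_left)

theorem IsPreconnected.encard_mul_le_hausdorffMeasure (hΓ : IsPreconnected Γ) {X : Set M}
    (hXΓ : X ⊆ Γ) {r : ℝ} (hsep : X.Pairwise fun x y => 2 * r ≤ dist x y)
    (hdiam : ENNReal.ofReal r ≤ ediam Γ) : X.encard * ENNReal.ofReal r ≤ μH[1] Γ := by
  rcases X.subsingleton_or_nontrivial with hsub | hnontriv
  · calc (X.encard : ℝ≥0∞) * ENNReal.ofReal r ≤ 1 * ENNReal.ofReal r := by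
          gcongr; exact_mod_cast encard_le_one_iff_subsingleton.2 hsub
      _ ≤ μH[1] Γ := by rw [one_mul]; exact hdiam.trans hΓ.ediam_le_hausdorffMeasure
  · refine encard_mul_le_measure_of_pairwiseDisjoint (A := (ball · r)) _
      (fun _ _ => measurableSet_ball)
      (fun x hx y hy hxy => ball_disjoint_ball (by linarith [hsep hx hy hxy])) fun x hx => ?_
    obtain ⟨y, hy, hyx⟩ := hnontriv.exists_ne x
    refine hΓ.ofReal_le_hausdorffMeasure_inter_ball (hXΓ hx) (hXΓ hy) ?_
    linarith [hsep hx hy hyx.symm, dist_nonneg (x := x) (y := y)]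

end Hausdorff

theorem net_card_le_length_general {M : Type*} [MetricSpace M] [MeasurableSpace M] [BorelSpace M]
    (Γ : Set M) (hconn : IsConnected Γ) (hfin : μH[1] Γ < ⊤)
    (n : ℕ) (X : Set M) (hXΓ : X ⊆ Γ)
    (hsep : ∀ x ∈ X, ∀ y ∈ X, x ≠ y → (2 : ℝ) ^ (-(n : ℤ)) < dist x y)
    (hdiam : (2 : ℝ≥0∞) ^ (-(n : ℤ) - 1) < EMetric.diam Γ) :
    X.Finite ∧ (X.ncard : ℝ≥0∞) * (2 : ℝ≥0∞) ^ (-(n : ℤ) - 1) ≤ μH[1] Γ := by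
  have hofReal : ENNReal.ofReal (2 ^ (-(n : ℤ) - 1)) = 2 ^ (-(n : ℤ) - 1) := by
    rw [ENNReal.ofReal, Real.toNNReal_zpow zero_le_two, coe_zpow (by simp)]; simp
  have htwice : 2 * (2 : ℝ) ^ (-(n : ℤ) - 1) = 2 ^ (-(n : ℤ)) := by
    rw [zpow_sub_one₀ two_ne_zero]; ring
  refine finite_and_ncard_mul_le_of_encard_mul_le
    (ENNReal.zpow_pos two_ne_zero ofNat_ne_top _).ne' hfin.ne ?_
  rw [← hofReal] at hdiam ⊢
  exact hconn.isPreconnected.encard_mul_le_hausdorffMeasure hXΓ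
    (fun x hx y hy hxy => htwice ▸ (hsep x hx y hy hxy).le) hdiam.le

/-- If `X` is a `2⁻ⁿ`-net for a compact connected set `Γ` of finite `H¹` measure
(with `2^{-n-1} < diam Γ`), then `#X · 2^{-n-1} ≤ H¹(Γ)`. -/
theorem net_card_le_length {M : Type*} [MetricSpace M] [MeasurableSpace M] [BorelSpace M]
    (Γ : Set M) (hcomp : IsCompact Γ) (hconn : IsConnected Γ) (hfin : μH[1] Γ < ⊤)
    (n : ℕ) (X : Set M) (hXΓ : X ⊆ Γ)
    (hsep : ∀ x ∈ X, ∀ y ∈ X, x ≠ y → (2 : ℝ) ^ (-(n : ℤ)) < dist x y)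
    (hdense : ∀ y ∈ Γ, ∃ x ∈ X, dist x y ≤ (2 : ℝ) ^ (-(n : ℤ)))
    (hdiam : (2 : ℝ≥0∞) ^ (-(n : ℤ) - 1) < EMetric.diam Γ) :
    X.Finite ∧ (X.ncard : ℝ≥0∞) * (2 : ℝ≥0∞) ^ (-(n : ℤ) - 1) ≤ μH[1] Γ :=
  net_card_le_length_general Γ hconn hfin n X hXΓ hsep hdiam
end

section
/- Let γ : 𝕋 → M be a rectifiable curve (Lipschitz, parameterized by arc length, of total length ℓ(γ)) and let v, r ∈ [0,1] be fixed. Then the telescoping sum Σ_{I′ dyadic} δ_d(γ∘ψ^{v,r}(I′)) over all dyadic intervals I′ ⊆ [0,1] is at most 2·ℓ(γ), where δ_d of an interval [a,b] under ψ^{v,r}(t) = v+rt mod 1 is δ₁ applied to the images under γ of the two endpoints and the midpoint. -/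
/-!
Let `c = γ ∘ ψ^{v,r}` on `[0, 1]` and let `Pₙ` be the length of the polygon inscribed in `c` with
vertices at the dyadic points `k / 2ⁿ`. Halving every side of that polygon shows that the defects
`δ_d` of the generation-`n` intervals add up to `Pₙ₊₁ - Pₙ ≥ 0`, so the whole sum telescopes to
`sup Pₙ - P₀`. Since `c` is `ℓ r`-Lipschitz, every `Pₙ` is at most `ℓ r ≤ ℓ`, so the sum is in
fact at most `ℓ`.
-/

open ENNReal NNReal Finset

theorem Finset.sum_range_two_mul_eq_sum_pairs {G : Type*} [AddCommMonoid G] (f : ℕ → G) (n : ℕ) :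
    ∑ k ∈ range (2 * n), f k = ∑ j ∈ range n, (f (2 * j) + f (2 * j + 1)) := by
  induction n with
  | zero => simp
  | succ n ih =>
    rw [Nat.mul_succ, sum_range_succ, sum_range_succ, ih, sum_range_succ, add_assoc]

theorem ENNReal.tsum_ofReal_sub_le_of_monotone {a : ℕ → ℝ} {c : ℝ} (ha : Monotone a)
    (hc : ∀ n, a n ≤ c) : ∑' n, ENNReal.ofReal (a (n + 1) - a n) ≤ ENNReal.ofReal (c - a 0) := by
  refine ENNReal.tsum_le_of_sum_range_le fun N => ?_
  rw [← ENNReal.ofReal_sum_of_nonneg fun n _ => sub_nonneg.2 (ha n.le_succ), sum_range_sub]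
  exact ENNReal.ofReal_le_ofReal (by linarith [hc N])

theorem tsum_dyadic_eq_tsum_sum_range (f : ℕ → ℕ → ℝ≥0∞) :
    ∑' p : {p : ℕ × ℕ // p.2 < 2 ^ p.1}, f p.1.1 p.1.2 = ∑' n, ∑ k ∈ range (2 ^ n), f n k := by
  rw [← (Equiv.subtypeProdEquivSigmaSubtype fun n k => k < 2 ^ n).symm.tsum_eq, ENNReal.tsum_sigma']
  refine tsum_congr fun n => ?_
  exact ((Equiv.subtypeEquivRight fun k => mem_range).tsum_eq _).symm.trans
    (Finset.tsum_subtype _ (f n))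

section DyadicPolygon

variable {M : Type*} [PseudoMetricSpace M]

noncomputable def dyadicPolygonLength (c : ℝ → M) (n : ℕ) : ℝ :=
  ∑ k ∈ range (2 ^ n), dist (c (k / 2 ^ n)) (c ((k + 1) / 2 ^ n))

/-- `δ₁` at the images of the endpoints and the midpoint of `[k / 2 ^ n, (k + 1) / 2 ^ n]`,
i.e. the paper's `δ_d(c([k / 2 ^ n, (k + 1) / 2 ^ n]))`. -/
noncomputable def dyadicDefect (c : ℝ → M) (n k : ℕ) : ℝ :=
  dist (c (k / 2 ^ n)) (c ((k + 1 / 2) / 2 ^ n)) +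
    dist (c ((k + 1 / 2) / 2 ^ n)) (c ((k + 1) / 2 ^ n)) - dist (c (k / 2 ^ n)) (c ((k + 1) / 2 ^ n))

theorem dyadicDefect_nonneg (c : ℝ → M) (n k : ℕ) : 0 ≤ dyadicDefect c n k :=
  sub_nonneg.2 (dist_triangle _ _ _)

theorem sum_dyadicDefect (c : ℝ → M) (n : ℕ) :
    ∑ k ∈ range (2 ^ n), dyadicDefect c n k =
      dyadicPolygonLength c (n + 1) - dyadicPolygonLength c n := by
  have hsplit : dyadicPolygonLength c (n + 1) = ∑ k ∈ range (2 ^ n),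
      (dist (c (k / 2 ^ n)) (c ((k + 1 / 2) / 2 ^ n)) +
        dist (c ((k + 1 / 2) / 2 ^ n)) (c ((k + 1) / 2 ^ n))) := by
    rw [dyadicPolygonLength, pow_succ', sum_range_two_mul_eq_sum_pairs]
    refine sum_congr rfl fun k _ => ?_
    push_cast
    congr 3 <;> field_simp <;> ring
  rw [hsplit, dyadicPolygonLength, ← sum_sub_distrib]
  rfl

theorem dyadicPolygonLength_nonneg (c : ℝ → M) (n : ℕ) : 0 ≤ dyadicPolygonLength c n :=
  sum_nonneg fun _ _ => dist_nonneg

theorem dyadicPolygonLength_mono (c : ℝ → M) : Monotone (dyadicPolygonLength c) :=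
  monotone_nat_of_le_succ fun n => sub_nonneg.1 <|
    sum_dyadicDefect c n ▸ sum_nonneg fun k _ => dyadicDefect_nonneg c n k

theorem LipschitzWith.dyadicPolygonLength_le {K : ℝ≥0} {c : ℝ → M} (hc : LipschitzWith K c)
    (n : ℕ) : dyadicPolygonLength c n ≤ K := by
  have hside (k : ℕ) : dist (c (k / 2 ^ n)) (c ((k + 1) / 2 ^ n)) ≤ K * (1 / 2 ^ n) := by
    refine (hc.dist_le_mul _ _).trans_eq ?_
    have hstep : ((k : ℝ) + 1) / 2 ^ n - k / 2 ^ n = 1 / 2 ^ n := by ring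
    rw [Real.dist_eq, abs_sub_comm, hstep, abs_of_pos (by positivity)]
  calc dyadicPolygonLength c n ≤ ∑ _k ∈ range (2 ^ n), (K : ℝ) * (1 / 2 ^ n) :=
        sum_le_sum fun k _ => hside k
    _ = K := by
        rw [sum_const, card_range, nsmul_eq_mul]
        field_simp
        push_cast
        ring

theorem LipschitzWith.tsum_dyadicDefect_le {K : ℝ≥0} {c : ℝ → M} (hc : LipschitzWith K c) :
    ∑' p : {p : ℕ × ℕ // p.2 < 2 ^ p.1}, ENNReal.ofReal (dyadicDefect c p.1.1 p.1.2) ≤ K := by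
  rw [tsum_dyadic_eq_tsum_sum_range fun n k => ENNReal.ofReal (dyadicDefect c n k)]
  calc ∑' n, ∑ k ∈ range (2 ^ n), ENNReal.ofReal (dyadicDefect c n k)
      = ∑' n, ENNReal.ofReal (dyadicPolygonLength c (n + 1) - dyadicPolygonLength c n) := by
        refine tsum_congr fun n => ?_
        rw [← sum_dyadicDefect, ENNReal.ofReal_sum_of_nonneg fun k _ => dyadicDefect_nonneg c n k]
    _ ≤ ENNReal.ofReal (K - dyadicPolygonLength c 0) :=
        ENNReal.tsum_ofReal_sub_le_of_monotone (dyadicPolygonLength_mono c)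
          hc.dyadicPolygonLength_le
    _ ≤ K := by
        rw [← ENNReal.ofReal_coe_nnreal]
        exact ENNReal.ofReal_le_ofReal (sub_le_self _ (dyadicPolygonLength_nonneg c 0))

end DyadicPolygon

theorem sum_delta_d_le_two_length_general {M : Type*} [MetricSpace M] (γ : ℝ → M)
    (ℓ : ℝ≥0) (hlip : LipschitzWith ℓ γ)
    (v r : ℝ) (hr : r ∈ Set.Icc (0 : ℝ) 1) :
    ∑' p : {p : ℕ × ℕ // p.2 < 2 ^ p.1},
        ENNReal.ofReal
          (dist (γ (v + r * ((p.1.2 : ℝ) / 2 ^ p.1.1)))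
              (γ (v + r * (((p.1.2 : ℝ) + 1 / 2) / 2 ^ p.1.1))) +
            dist (γ (v + r * (((p.1.2 : ℝ) + 1 / 2) / 2 ^ p.1.1)))
              (γ (v + r * (((p.1.2 : ℝ) + 1) / 2 ^ p.1.1))) -
            dist (γ (v + r * ((p.1.2 : ℝ) / 2 ^ p.1.1)))
              (γ (v + r * (((p.1.2 : ℝ) + 1) / 2 ^ p.1.1)))) ≤
      2 * (ℓ : ℝ≥0∞) := by
  have hψ : LipschitzWith ‖r‖₊ fun t : ℝ => v + r * t := by
    refine LipschitzWith.of_dist_le_mul fun s t => ?_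
    rw [Real.dist_eq, Real.dist_eq, add_sub_add_left_eq_sub, ← mul_sub, abs_mul, coe_nnnorm,
      Real.norm_eq_abs]
  have hr1 : ‖r‖₊ ≤ 1 := by
    rw [← NNReal.coe_le_coe, coe_nnnorm, Real.norm_of_nonneg hr.1]
    exact hr.2
  calc _ ≤ ((ℓ * ‖r‖₊ : ℝ≥0) : ℝ≥0∞) := (hlip.comp hψ).tsum_dyadicDefect_le
    _ ≤ ℓ := by gcongr; exact mul_le_of_le_one_right' hr1
    _ ≤ 2 * ℓ := le_mul_of_one_le_left zero_le one_le_two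

/-- Telescoping bound: for a `1`-periodic `ℓ`-Lipschitz curve `γ : ℝ → M` (a rectifiable
curve on the circle of length `ℓ`) and fixed `v, r ∈ [0,1]`, the sum of `δ_d(γ∘ψ^{v,r}(I'))`
over all dyadic intervals `I' ⊆ [0,1]` is at most `2ℓ`. -/
theorem sum_delta_d_le_two_length {M : Type*} [MetricSpace M] (γ : ℝ → M)
    (hper : ∀ x, γ (x + 1) = γ x) (ℓ : ℝ≥0) (hlip : LipschitzWith ℓ γ)
    (v r : ℝ) (hv : v ∈ Set.Icc (0 : ℝ) 1) (hr : r ∈ Set.Icc (0 : ℝ) 1) :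
    ∑' p : {p : ℕ × ℕ // p.2 < 2 ^ p.1},
        ENNReal.ofReal
          (dist (γ (v + r * ((p.1.2 : ℝ) / 2 ^ p.1.1)))
              (γ (v + r * (((p.1.2 : ℝ) + 1 / 2) / 2 ^ p.1.1))) +
            dist (γ (v + r * (((p.1.2 : ℝ) + 1 / 2) / 2 ^ p.1.1)))
              (γ (v + r * (((p.1.2 : ℝ) + 1) / 2 ^ p.1.1))) -
            dist (γ (v + r * ((p.1.2 : ℝ) / 2 ^ p.1.1)))
              (γ (v + r * (((p.1.2 : ℝ) + 1) / 2 ^ p.1.1)))) ≤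
      2 * (ℓ : ℝ≥0∞) :=
  sum_delta_d_le_two_length_general γ ℓ hlip v r hr
end
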